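/- (Bauer–Fike) Let A ∈ ℂ^{n×n} be diagonalizable, A = U·D·U⁻¹ with D diagonal and U invertible, and let E ∈ ℂ^{n×n}. Then for every eigenvalue μ of A + E there exists an eigenvalue λ of A (i.e., a diagonal entry of D) such that |μ − λ| ≤ ‖U‖₂·‖U⁻¹‖₂·‖E‖₂. -/

import Mathlib

/-- The spectral norm on `ℂ^{n×n}`: the operator norm induced by the Euclidean vector norm. -/
noncomputable def specNorm {n : ℕ} (M : Matrix (Fin n) (Fin n) ℂ) : ℝ :=
  ‖LinearMap.toContinuousLinearMap (Matrix.toEuclideanLin M)‖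

/-- `μ` is an eigenvalue of a complex square matrix `M` iff `M − μ·I` is not invertible. -/
def IsEigenvalue {n : ℕ} (M : Matrix (Fin n) (Fin n) ℂ) (μ : ℂ) : Prop :=
  ¬ IsUnit (M - μ • (1 : Matrix (Fin n) (Fin n) ℂ))

/-! Conjugating by `U` turns an eigenvalue `μ` of `A + E` into one of `D + F` with
`F = U⁻¹ E U`, so `‖F‖ ≤ ‖U‖ ‖U⁻¹‖ ‖E‖`. For an eigenvector `v` of `D + F` we get
`(μ - d i) v i = (F v) i` in every coordinate, hence `min_i |μ - d i| ‖v‖ ≤ ‖F v‖ ≤ ‖F‖ ‖v‖`. -/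

open Matrix
open scoped Matrix.Norms.L2Operator

lemma EuclideanSpace.norm_mono {𝕜 ι : Type*} [RCLike 𝕜] [Fintype ι] {x y : EuclideanSpace 𝕜 ι}
    (h : ∀ i, ‖x i‖ ≤ ‖y i‖) : ‖x‖ ≤ ‖y‖ := by
  rw [← sq_le_sq₀ (norm_nonneg _) (norm_nonneg _), EuclideanSpace.norm_sq_eq,
    EuclideanSpace.norm_sq_eq]
  gcongr with i
  exact h i

lemma specNorm_eq_l2_opNorm {n : ℕ} (M : Matrix (Fin n) (Fin n) ℂ) : specNorm M = ‖M‖ := rfl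

section IsEigenvalue

variable {n : ℕ} {M : Matrix (Fin n) (Fin n) ℂ} {μ : ℂ}

lemma isEigenvalue_iff_det_eq_zero : IsEigenvalue M μ ↔ (M - μ • 1).det = 0 := by
  rw [IsEigenvalue, isUnit_iff_isUnit_det, isUnit_iff_ne_zero, not_not]

lemma isEigenvalue_iff_exists_mulVec_eq_smul : IsEigenvalue M μ ↔ ∃ v ≠ 0, M *ᵥ v = μ • v := by
  simp only [isEigenvalue_iff_det_eq_zero, ← exists_mulVec_eq_zero_iff, sub_mulVec, smul_mulVec,
    one_mulVec, sub_eq_zero]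

lemma IsEigenvalue.nonsing_inv_mul_mul {U : Matrix (Fin n) (Fin n) ℂ} (hU : IsUnit U)
    (h : IsEigenvalue M μ) : IsEigenvalue (U⁻¹ * M * U) μ := by
  have hUU : U⁻¹ * U = 1 := nonsing_inv_mul U ((isUnit_iff_isUnit_det U).1 hU)
  have : U⁻¹ * M * U - μ • 1 = U⁻¹ * (M - μ • 1) * U := by
    rw [Matrix.mul_sub, Matrix.sub_mul, Matrix.mul_smul, Matrix.smul_mul, mul_one, hUU]
  rw [isEigenvalue_iff_det_eq_zero, this, det_conj' hU, ← isEigenvalue_iff_det_eq_zero]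
  exact h

end IsEigenvalue

theorem exists_norm_sub_le_of_isEigenvalue_diagonal_add {n : ℕ} (d : Fin n → ℂ)
    (F : Matrix (Fin n) (Fin n) ℂ) {μ : ℂ} (h : IsEigenvalue (diagonal d + F) μ) :
    ∃ i, ‖μ - d i‖ ≤ ‖F‖ := by
  obtain ⟨v, hv0, hv⟩ := isEigenvalue_iff_exists_mulVec_eq_smul.1 h
  have hFv : ∀ i, (F *ᵥ v) i = (μ - d i) * v i := fun i => by
    have := congrFun hv i
    simp only [add_mulVec, mulVec_diagonal, Pi.add_apply, Pi.smul_apply, smul_eq_mul] at this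
    rw [sub_mul, ← this]
    ring
  have : Nonempty (Fin n) := let ⟨i, _⟩ := Function.ne_iff.1 hv0; ⟨i⟩
  obtain ⟨i₀, hi₀⟩ := Finite.exists_min fun i => ‖μ - d i‖
  refine ⟨i₀, le_of_mul_le_mul_right ?_ (norm_pos_iff.2 ((WithLp.toLp_eq_zero 2).not.2 hv0))⟩
  calc ‖μ - d i₀‖ * ‖WithLp.toLp 2 v‖ = ‖(μ - d i₀) • WithLp.toLp 2 v‖ := (norm_smul _ _).symm
    _ ≤ ‖(EuclideanSpace.equiv _ ℂ).symm (F *ᵥ v)‖ := EuclideanSpace.norm_mono fun i => by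
      simp only [PiLp.smul_apply, smul_eq_mul, norm_mul, PiLp.continuousLinearEquiv_symm_apply, hFv]
      gcongr
      exact hi₀ i
    _ ≤ ‖F‖ * ‖WithLp.toLp 2 v‖ := l2_opNorm_mulVec F _

/-- **Bauer–Fike theorem**: if `A = U·D·U⁻¹` is diagonalizable and `μ` is an eigenvalue
of `A + E`, then some diagonal entry `d i` of `D` satisfies
`|μ − d i| ≤ ‖U‖₂·‖U⁻¹‖₂·‖E‖₂`. -/
theorem bauer_fike {n : ℕ} (U : Matrix (Fin n) (Fin n) ℂ) (hU : IsUnit U)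
    (d : Fin n → ℂ) (A E : Matrix (Fin n) (Fin n) ℂ)
    (hA : A = U * Matrix.diagonal d * U⁻¹)
    (μ : ℂ) (hμ : IsEigenvalue (A + E) μ) :
    ∃ i : Fin n, ‖μ - d i‖ ≤ specNorm U * specNorm U⁻¹ * specNorm E := by
  have hUU : U⁻¹ * U = 1 := nonsing_inv_mul U ((isUnit_iff_isUnit_det U).1 hU)
  have hconj : U⁻¹ * (A + E) * U = diagonal d + U⁻¹ * E * U := by
    rw [hA, Matrix.mul_add, Matrix.add_mul]
    simp only [← Matrix.mul_assoc, hUU, one_mul, Matrix.mul_assoc _ U⁻¹ U, mul_one]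
  obtain ⟨i, hi⟩ := exists_norm_sub_le_of_isEigenvalue_diagonal_add d (U⁻¹ * E * U)
    (hconj ▸ hμ.nonsing_inv_mul_mul hU)
  refine ⟨i, hi.trans ?_⟩
  simp only [specNorm_eq_l2_opNorm]
  calc ‖U⁻¹ * E * U‖ ≤ ‖U⁻¹‖ * ‖E‖ * ‖U‖ :=
        (l2_opNorm_mul _ _).trans (by gcongr; exact l2_opNorm_mul _ _)
    _ = ‖U‖ * ‖U⁻¹‖ * ‖E‖ := by ring
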